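/- Fix w ∈ ℝ^p, b ∈ ℝ, training samples (x_n, y_n) ∈ ℝ^p × {−1, +1} for n = 1, …, N, and constants A > 0, C_a ≥ 0, C > 0. Let U₀ = {δ ∈ ℝ^p : ‖δ‖₂² ≤ C} and U⁺ = {(α₁δ₁, …, α_Nδ_N) : Σ_{i=1}^N α_i = 1, α_i ≥ 0, δ_i ∈ U₀ for all i}. Then sup over (δ₁, …, δ_N) ∈ U⁺ of [ A Σ_{n=1}^N [1 − y_n(wᵀ(x_n − δ_n) + b)]₊ − C_a Σ_{n=1}^N ‖δ_n‖₀ ] is less than or equal to A Σ_{n=1}^N [1 − y_n(wᵀx_n + b)]₊ + sup over δ ∈ U₀ of [ A wᵀδ − C_a ‖δ‖₀ ]. -/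

import Mathlib

open Finset

/-- Hinge function `[z]₊ = max(z, 0)`. -/
noncomputable def hinge (z : ℝ) : ℝ := max z 0

/-- ℓ0 "norm": number of nonzero coordinates, as a real number. -/
noncomputable def l0 {p : ℕ} (δ : Fin p → ℝ) : ℝ :=
  ((Finset.univ.filter (fun i => δ i ≠ 0)).card : ℝ)

/-- Atomic action set `U₀ = {δ : ‖δ‖₂² ≤ C}`. -/
def atomicSet (p : ℕ) (C : ℝ) : Set (Fin p → ℝ) :=
  {δ | ∑ i, (δ i) ^ 2 ≤ C}

/-- `U⁺`: convex-combination-scaled perturbations from `U₀`. -/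
def Uplus (p N : ℕ) (C : ℝ) : Set (Fin N → Fin p → ℝ) :=
  {d | ∃ (α : Fin N → ℝ) (δ : Fin N → Fin p → ℝ),
    (∑ i, α i = 1) ∧ (∀ i, 0 ≤ α i) ∧ (∀ i, δ i ∈ atomicSet p C) ∧
    ∀ i, d i = α i • δ i}

/-!
Subadditivity and positive homogeneity of the hinge give, for `α ≥ 0`,
`[1 − y(wᵀ(x − αδ) + b)]₊ ≤ [1 − y(wᵀx + b)]₊ + α [y wᵀδ]₊`.
Since `y = ±1`, the flipped action `y δ` again lies in `U₀` and has the support of `δ`, so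
`A [y wᵀδ]₊ − C_a ‖δ‖₀` is at most the atomic supremum `S` (use `δ = 0` when the hinge vanishes).
For `α ∈ [0, 1]` also `‖αδ‖₀ ≥ α ‖δ‖₀`, so each sample costs at most its clean hinge plus `α_n S`,
and `Σ α_n = 1` sums these shares to `S`.
-/

lemma hinge_nonneg (z : ℝ) : 0 ≤ hinge z := le_max_right _ _

lemma hinge_add_le (a c : ℝ) : hinge (a + c) ≤ hinge a + hinge c := by
  simpa [hinge] using max_add_add_le_max_add_max (a := a) (b := c) (c := (0 : ℝ)) (d := 0)

lemma hinge_mul_of_nonneg {c : ℝ} (hc : 0 ≤ c) (z : ℝ) : hinge (c * z) = c * hinge z := by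
  simp [hinge, mul_max_of_nonneg z 0 hc]

section L0

variable {p : ℕ}

lemma l0_nonneg (δ : Fin p → ℝ) : 0 ≤ l0 δ := Nat.cast_nonneg _

@[simp]
lemma l0_zero : l0 (0 : Fin p → ℝ) = 0 := by simp [l0]

lemma l0_smul {c : ℝ} (hc : c ≠ 0) (δ : Fin p → ℝ) : l0 (c • δ) = l0 δ := by
  simp [l0, hc]

lemma mul_l0_le_l0_smul {α : ℝ} (hα0 : 0 ≤ α) (hα1 : α ≤ 1) (δ : Fin p → ℝ) :
    α * l0 δ ≤ l0 (α • δ) := by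
  rcases hα0.eq_or_lt with rfl | hα
  · simp
  · rw [l0_smul hα.ne']
    exact mul_le_of_le_one_left (l0_nonneg δ) hα1

end L0

section AtomicSet

variable {p : ℕ} {C : ℝ}

lemma zero_mem_atomicSet (hC : 0 ≤ C) : (0 : Fin p → ℝ) ∈ atomicSet p C := by
  simpa [atomicSet] using hC

lemma smul_mem_atomicSet {c : ℝ} (hc : c ^ 2 ≤ 1) {δ : Fin p → ℝ} (hδ : δ ∈ atomicSet p C) :
    c • δ ∈ atomicSet p C := by
  have hδ_sq : 0 ≤ ∑ i, δ i ^ 2 := sum_nonneg fun i _ => sq_nonneg (δ i)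
  calc ∑ i, (c • δ) i ^ 2 = c ^ 2 * ∑ i, δ i ^ 2 := by simp [mul_pow, mul_sum]
    _ ≤ ∑ i, δ i ^ 2 := mul_le_of_le_one_left hδ_sq hc
    _ ≤ C := hδ

lemma two_mul_dotProduct_le_of_mem_atomicSet (w : Fin p → ℝ) {δ : Fin p → ℝ}
    (hδ : δ ∈ atomicSet p C) : 2 * (w ⬝ᵥ δ) ≤ ∑ i, w i ^ 2 + C := by
  calc 2 * (w ⬝ᵥ δ) = ∑ i, 2 * w i * δ i := by simp [dotProduct, mul_sum, mul_assoc]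
    _ ≤ ∑ i, (w i ^ 2 + δ i ^ 2) := sum_le_sum fun i _ => two_mul_le_add_sq (w i) (δ i)
    _ ≤ ∑ i, w i ^ 2 + C := by rw [sum_add_distrib]; exact add_le_add_right hδ _

end AtomicSet

section AtomicObjective

variable {p : ℕ} (A Ca : ℝ) (w : Fin p → ℝ)

noncomputable def atomicObjective (δ : Fin p → ℝ) : ℝ := A * (w ⬝ᵥ δ) - Ca * l0 δ

variable {A Ca} {C : ℝ}

@[simp]
lemma atomicObjective_zero : atomicObjective A Ca w 0 = 0 := by
  simp [atomicObjective]

lemma bddAbove_atomicObjective_image (hA : 0 ≤ A) (hCa : 0 ≤ Ca) :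
    BddAbove (atomicObjective A Ca w '' atomicSet p C) := by
  refine ⟨A * ((∑ i, w i ^ 2 + C) / 2), ?_⟩
  rintro _ ⟨δ, hδ, rfl⟩
  have hdot := two_mul_dotProduct_le_of_mem_atomicSet w hδ
  have hl0 := mul_nonneg hCa (l0_nonneg δ)
  rw [atomicObjective]
  nlinarith

lemma sSup_atomicObjective_nonneg (hA : 0 ≤ A) (hCa : 0 ≤ Ca) (hC : 0 ≤ C) :
    0 ≤ sSup (atomicObjective A Ca w '' atomicSet p C) :=
  le_csSup_of_le (bddAbove_atomicObjective_image w hA hCa)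
    ⟨0, zero_mem_atomicSet hC, rfl⟩ (atomicObjective_zero w).ge

lemma mul_hinge_sub_le_sSup_atomicObjective (hA : 0 ≤ A) (hCa : 0 ≤ Ca) (hC : 0 ≤ C)
    {y : ℝ} (hy : y = 1 ∨ y = -1) {δ : Fin p → ℝ} (hδ : δ ∈ atomicSet p C) :
    A * hinge (y * (w ⬝ᵥ δ)) - Ca * l0 δ ≤ sSup (atomicObjective A Ca w '' atomicSet p C) := by
  have hbdd := bddAbove_atomicObjective_image w (C := C) hA hCa
  rcases le_or_gt (y * (w ⬝ᵥ δ)) 0 with hneg | hpos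
  · rw [hinge, max_eq_right hneg, mul_zero, zero_sub]
    linarith [sSup_atomicObjective_nonneg w hA hCa hC, mul_nonneg hCa (l0_nonneg δ)]
  · have hy_sq : y ^ 2 = 1 := by rcases hy with rfl | rfl <;> norm_num
    have hy_ne : y ≠ 0 := by rintro rfl; norm_num at hy_sq
    calc A * hinge (y * (w ⬝ᵥ δ)) - Ca * l0 δ = atomicObjective A Ca w (y • δ) := by
          rw [hinge, max_eq_left hpos.le, atomicObjective, dotProduct_smul, smul_eq_mul,
            l0_smul hy_ne]
      _ ≤ _ := le_csSup hbdd ⟨_, smul_mem_atomicSet hy_sq.le hδ, rfl⟩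

end AtomicObjective

lemma hinge_margin_sub_smul_le {p : ℕ} (w x δ : Fin p → ℝ) (b y : ℝ) {α : ℝ} (hα : 0 ≤ α) :
    hinge (1 - y * (w ⬝ᵥ (x - α • δ) + b))
      ≤ hinge (1 - y * (w ⬝ᵥ x + b)) + α * hinge (y * (w ⬝ᵥ δ)) := by
  have harg : 1 - y * (w ⬝ᵥ (x - α • δ) + b) = (1 - y * (w ⬝ᵥ x + b)) + α * (y * (w ⬝ᵥ δ)) := by
    simp only [dotProduct_sub, dotProduct_smul, smul_eq_mul]
    ring
  rw [harg, ← hinge_mul_of_nonneg hα]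
  exact hinge_add_le _ _

lemma perturbed_loss_le {p : ℕ} {A Ca C α y b : ℝ} (hA : 0 ≤ A) (hCa : 0 ≤ Ca) (hC : 0 ≤ C)
    (hα0 : 0 ≤ α) (hα1 : α ≤ 1) (hy : y = 1 ∨ y = -1) (w x : Fin p → ℝ) {δ : Fin p → ℝ}
    (hδ : δ ∈ atomicSet p C) :
    A * hinge (1 - y * (w ⬝ᵥ (x - α • δ) + b)) - Ca * l0 (α • δ)
      ≤ A * hinge (1 - y * (w ⬝ᵥ x + b)) + α * sSup (atomicObjective A Ca w '' atomicSet p C) := by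
  have hhinge := mul_le_mul_of_nonneg_left (hinge_margin_sub_smul_le w x δ b y hα0) hA
  have hl0 := mul_le_mul_of_nonneg_left (mul_l0_le_l0_smul hα0 hα1 δ) hCa
  calc A * hinge (1 - y * (w ⬝ᵥ (x - α • δ) + b)) - Ca * l0 (α • δ)
      ≤ A * (hinge (1 - y * (w ⬝ᵥ x + b)) + α * hinge (y * (w ⬝ᵥ δ))) - Ca * (α * l0 δ) :=
        sub_le_sub hhinge hl0
    _ = A * hinge (1 - y * (w ⬝ᵥ x + b)) + α * (A * hinge (y * (w ⬝ᵥ δ)) - Ca * l0 δ) := by ring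
    _ ≤ _ := by grw [mul_hinge_sub_le_sSup_atomicObjective w hA hCa hC hy hδ]

/-- upper bound, Inequality (28) of Appendix A. -/
theorem robust_hinge_upper_bound {p N : ℕ}
    (w : Fin p → ℝ) (b : ℝ)
    (x : Fin N → Fin p → ℝ) (y : Fin N → ℝ)
    (hy : ∀ n, y n = 1 ∨ y n = -1)
    (A Ca C : ℝ) (hA : 0 < A) (hCa : 0 ≤ Ca) (hC : 0 < C) :
    sSup ((fun d : Fin N → Fin p → ℝ =>
        A * ∑ n, hinge (1 - y n * ((∑ i, w i * (x n i - d n i)) + b))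
          - Ca * ∑ n, l0 (d n)) '' Uplus p N C)
      ≤
    A * ∑ n, hinge (1 - y n * ((∑ i, w i * x n i) + b))
      + sSup ((fun δ : Fin p → ℝ =>
          A * (∑ i, w i * δ i) - Ca * l0 δ) '' atomicSet p C) := by
  set S := sSup (atomicObjective A Ca w '' atomicSet p C)
  have hS : 0 ≤ S := sSup_atomicObjective_nonneg w hA.le hCa hC.le
  have hclean : 0 ≤ A * ∑ n, hinge (1 - y n * ((∑ i, w i * x n i) + b)) :=
    mul_nonneg hA.le (sum_nonneg fun n _ => hinge_nonneg _)
  -- the nonnegative bound also covers `Uplus p 0 C = ∅`, where `sSup ∅ = 0`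
  refine Real.sSup_le ?_ (add_nonneg hclean hS)
  rintro _ ⟨d, ⟨α, δ, hα_sum, hα0, hδ, hd⟩, rfl⟩
  obtain rfl : d = fun n => α n • δ n := funext hd
  have hα1 : ∀ n, α n ≤ 1 := fun n => hα_sum ▸ single_le_sum (fun j _ => hα0 j) (mem_univ n)
  calc _ = ∑ n, (A * hinge (1 - y n * (w ⬝ᵥ (x n - α n • δ n) + b)) - Ca * l0 (α n • δ n)) := by
        beta_reduce; rw [mul_sum, mul_sum, sum_sub_distrib]; rfl
    _ ≤ ∑ n, (A * hinge (1 - y n * (w ⬝ᵥ x n + b)) + α n * S) :=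
        sum_le_sum fun n _ => perturbed_loss_le hA.le hCa hC.le (hα0 n) (hα1 n) (hy n) w (x n) (hδ n)
    _ = _ := by rw [sum_add_distrib, ← sum_mul, hα_sum, one_mul, ← mul_sum]; rfl
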